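/- Let G be an infinite finitely generated amenable group. Then there exists a G-effectively closed subshift (over the alphabet {0,1,2}) which is not sofic. -/

import Mathlib

open scoped Classical

noncomputable section

namespace SDG

/-! ### Relativized computability -/

/-- Partial recursive functions `ℕ →. ℕ` relative to an oracle `O`. -/
inductive NatPartrecIn (O : ℕ →. ℕ) : (ℕ →. ℕ) → Prop
  | oracle : NatPartrecIn O O
  | zero : NatPartrecIn O (pure 0)
  | succ : NatPartrecIn O Nat.succ
  | left : NatPartrecIn O ↑fun n : ℕ => n.unpair.1
  | right : NatPartrecIn O ↑fun n : ℕ => n.unpair.2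
  | pair {f g} : NatPartrecIn O f → NatPartrecIn O g →
      NatPartrecIn O fun n => Nat.pair <$> f n <*> g n
  | comp {f g} : NatPartrecIn O f → NatPartrecIn O g →
      NatPartrecIn O fun n => g n >>= f
  | prec {f g} : NatPartrecIn O f → NatPartrecIn O g →
      NatPartrecIn O (Nat.unpaired fun a n =>
        n.rec (f a) fun y IH => do let i ← IH; g (Nat.pair a (Nat.pair y i)))
  | rfind {f} : NatPartrecIn O f →
      NatPartrecIn O fun a => Nat.rfind fun n => (fun m => m = 0) <$> f (Nat.pair a n)

/-- A partial function between `Primcodable` types is partial recursive in the oracle `O`. -/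
def PartrecIn (O : ℕ →. ℕ) {α σ : Type} [Primcodable α] [Primcodable σ] (f : α →. σ) : Prop :=
  NatPartrecIn O fun n =>
    Part.bind (Part.ofOption (Encodable.decode (α := α) n)) fun a => (f a).map Encodable.encode

/-- A predicate is recursively enumerable in the oracle `O` if it is the domain of a partial
function recursive in `O`. -/
def RePredIn (O : ℕ →. ℕ) {α : Type} [Primcodable α] (p : α → Prop) : Prop :=
  PartrecIn O fun a => Part.assert (p a) fun _ => Part.some ()

/-- The characteristic function (as an oracle `ℕ →. ℕ`) of a set `L` of elements of a
`Primcodable` type: on the code of an element of `L` it answers `1`, elsewhere `0`. -/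
def charFun {α : Type} [Primcodable α] (L : Set α) : ℕ →. ℕ :=
  fun n => Part.some (if ∃ a ∈ L, Encodable.encode a = n then 1 else 0)

/-! ### Finitely generated groups, words and pattern codings -/

variable {G : Type} [Group G]

/-- The group element represented by a word over the generators `S`. -/
def wordEval {k : ℕ} (S : Fin k → G) (w : List (Fin k)) : G :=
  (w.map S).prod

/-- `S : Fin k → G` is a finite symmetric generating family containing the identity. -/
def IsGenData {k : ℕ} (S : Fin k → G) : Prop :=
  (∃ i, S i = 1) ∧ (∀ i, ∃ j, S j = (S i)⁻¹) ∧ Subgroup.closure (Set.range S) = ⊤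

/-- The word problem of `G` with respect to the generating family `S`. -/
def WP {k : ℕ} (S : Fin k → G) : Set (List (Fin k)) :=
  {w | wordEval S w = 1}

/-- A pattern coding over the alphabet `A`: a finite list of pairs (word, symbol). -/
abbrev PatternCoding (k : ℕ) (A : Type) : Type :=
  List (List (Fin k) × A)

/-- The subshift defined by a set `C` of pattern codings: configurations in which no translate
of a coded pattern occurs. -/
def XC {k : ℕ} (S : Fin k → G) {A : Type} (C : Set (PatternCoding k A)) : Set (G → A) :=
  {x | ¬ ∃ (g : G) (c : PatternCoding k A), c ∈ C ∧ ∀ p ∈ c, x (g * wordEval S p.1) = p.2}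

/-- A set is effectively closed if it is defined by a recursively enumerable set of
pattern codings. -/
def EffectivelyClosed {k : ℕ} (S : Fin k → G) {A : Type} [Primcodable A]
    (X : Set (G → A)) : Prop :=
  ∃ C : Set (PatternCoding k A), REPred (· ∈ C) ∧ X = XC S C

/-- A set is `G`-effectively closed if it is defined by a set of pattern codings which is
recursively enumerable with oracle the word problem of `G`. -/
def GEffectivelyClosed {k : ℕ} (S : Fin k → G) {A : Type} [Primcodable A]
    (X : Set (G → A)) : Prop :=
  ∃ C : Set (PatternCoding k A), RePredIn (charFun (WP S)) (· ∈ C) ∧ X = XC S C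

/-- A pattern coding is consistent if words representing the same group element receive the
same symbol. -/
def Consistent {k : ℕ} (S : Fin k → G) {A : Type} (c : PatternCoding k A) : Prop :=
  ∀ p ∈ c, ∀ q ∈ c, wordEval S p.1 = wordEval S q.1 → p.2 = q.2

/-! ### Subshifts, SFTs, sofic subshifts -/

/-- `X ⊆ A^G` is a subshift: closed (for the product of the discrete topology) and
shift-invariant. -/
def IsSubshift {A : Type} (X : Set (G → A)) : Prop :=
  (letI : TopologicalSpace A := ⊥; IsClosed X) ∧
    ∀ x ∈ X, ∀ g : G, (fun h => x (g⁻¹ * h)) ∈ X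

/-- A pattern with finite support over the alphabet `A`. -/
structure Pattern (G : Type) (A : Type) where
  supp : Finset G
  val : (g : G) → g ∈ supp → A

/-- The pattern `p` occurs in the configuration `x` at position `g`. -/
def PatternOccurs {A : Type} (p : Pattern G A) (x : G → A) (g : G) : Prop :=
  ∀ (h : G) (hh : h ∈ p.supp), x (g * h) = p.val h hh

/-- The subshift defined by a set of forbidden patterns. -/
def XPat {A : Type} (Fs : Set (Pattern G A)) : Set (G → A) :=
  {x | ¬ ∃ (g : G) (p : Pattern G A), p ∈ Fs ∧ PatternOccurs p x g}

/-- A subshift of finite type: defined by a finite set of forbidden patterns. -/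
def IsSFT {A : Type} (X : Set (G → A)) : Prop :=
  ∃ Fs : Set (Pattern G A), Fs.Finite ∧ X = XPat Fs

/-- A witness that `X` is sofic: an SFT `Y` over a finite alphabet `B` together with a factor
code (continuous shift-equivariant surjection) from `Y` onto `X`. -/
structure SoficVia (G : Type) [Group G] {A : Type} (X : Set (G → A)) : Type 1 where
  B : Type
  finB : Fintype B
  Y : Set (G → B)
  sft : IsSFT Y
  subY : IsSubshift Y
  phi : (G → B) → (G → A)
  cont : letI : TopologicalSpace B := ⊥
         letI : TopologicalSpace A := ⊥
         ContinuousOn phi Y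
  equiv : ∀ y ∈ Y, ∀ g : G, phi (fun h => y (g⁻¹ * h)) = fun h => phi y (g⁻¹ * h)
  image : phi '' Y = X

/-- A subshift is sofic if it is the image of an SFT under a factor code. -/
def IsSofic {A : Type} (X : Set (G → A)) : Prop :=
  Nonempty (SoficVia G X)

/-- A factor code from `X` onto `Y`: continuous (discrete product topologies),
shift-equivariant and surjective. -/
def FactorCode {A B : Type} (X : Set (G → A)) (Y : Set (G → B))
    (φ : (G → A) → (G → B)) : Prop :=
  (letI : TopologicalSpace A := ⊥
   letI : TopologicalSpace B := ⊥
   ContinuousOn φ X) ∧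
  (∀ x ∈ X, ∀ g : G, φ (fun h => x (g⁻¹ * h)) = fun h => φ x (g⁻¹ * h)) ∧
  φ '' X = Y

/-- Two subshifts are conjugate if there is a shift-equivariant homeomorphism between them. -/
def Conjugate {A B : Type} (X : Set (G → A)) (Y : Set (G → B)) : Prop :=
  ∃ (φ : (G → A) → (G → B)) (ψ : (G → B) → (G → A)),
    FactorCode X Y φ ∧ FactorCode Y X ψ ∧
    (∀ x ∈ X, ψ (φ x) = x) ∧ (∀ y ∈ Y, φ (ψ y) = y)

/-- The one-or-less subshift: configurations with at most one occurrence of the symbol `1`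
(represented by `true`). -/
def Xle1 (G : Type) : Set (G → Bool) :=
  {x | ∀ g h : G, x g = true → x h = true → g = h}

/-! ### `G`-machines -/

/-- A `G`-machine: finite set of states, finite tape alphabet `A` with a blank symbol, initial
state, accepting states, and a transition function moving with the generators `Fin k`. -/
structure GMachine (k : ℕ) (A : Type) : Type 1 where
  Q : Type
  finQ : Fintype Q
  blank : A
  q0 : Q
  QF : Set Q
  delta : A × Q → A × Q × Fin k

/-- One step of a `G`-machine in the fixed head model: if `δ(x(1),q) = (a,q',s)` then the new
configuration is `σ_{s⁻¹} x̃` where `x̃` is `x` with the value at `1` replaced by `a`. -/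
def GMachine.step {k : ℕ} {A : Type} (M : GMachine k A) (S : Fin k → G) :
    (G → A) × M.Q → (G → A) × M.Q :=
  fun xq =>
    let t := M.delta (xq.1 1, xq.2)
    let xt : G → A := Function.update xq.1 1 t.1
    (fun h => xt (S t.2.2 * h), t.2.1)

/-- The configuration which equals the pattern `p` on its support and `blank` elsewhere. -/
def Pattern.config {A : Type} (p : Pattern G A) (blank : A) : G → A :=
  fun g => if h : g ∈ p.supp then p.val g h else blank

/-- The `G`-machine `M` accepts the pattern `p` if starting from the configuration `x^p` in the
initial state it eventually reaches an accepting state. -/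
def GMachine.Accepts {k : ℕ} {A : Type} (M : GMachine k A) (S : Fin k → G)
    (p : Pattern G A) : Prop :=
  ∃ n : ℕ, ((M.step S)^[n] (p.config M.blank, M.q0)).2 ∈ M.QF

/-- A set of patterns is `G`-recursively enumerable if some `G`-machine accepts exactly its
elements. -/
def GRecEnum {k : ℕ} (S : Fin k → G) {A : Type} (L : Set (Pattern G A)) : Prop :=
  ∃ M : GMachine k A, ∀ p : Pattern G A, M.Accepts S p ↔ p ∈ L

/-- The consistent pattern coding `c` defines the pattern `p`. -/
def Defines {k : ℕ} (S : Fin k → G) {A : Type} (c : PatternCoding k A)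
    (p : Pattern G A) : Prop :=
  (∀ g : G, g ∈ p.supp ↔ ∃ q ∈ c, wordEval S q.1 = g) ∧
  ∀ q ∈ c, ∀ hg : wordEval S q.1 ∈ p.supp, p.val (wordEval S q.1) hg = q.2

/-- `p(C)`: the set of patterns defined by the consistent pattern codings of `C`. -/
def patternsOf {k : ℕ} (S : Fin k → G) {A : Type} (C : Set (PatternCoding k A)) :
    Set (Pattern G A) :=
  {p | ∃ c ∈ C, Consistent S c ∧ Defines S c p}

/-- A set of patterns is closed by extensions if any pattern extending a pattern of the set
also belongs to the set. -/
def ClosedByExtensions {A : Type} (L : Set (Pattern G A)) : Prop :=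
  ∀ (p₁ p₂ : Pattern G A) (hsub : p₁.supp ⊆ p₂.supp),
    (∀ (g : G) (hg : g ∈ p₁.supp), p₂.val g (hsub hg) = p₁.val g hg) →
    p₁ ∈ L → p₂ ∈ L

/-! ### Balls, ends, amenability -/

/-- The ball of radius `n` in the word metric given by `S`. -/
def ballS {k : ℕ} (S : Fin k → G) (n : ℕ) : Set G :=
  {x | ∃ w : List (Fin k), w.length ≤ n ∧ wordEval S w = x}

/-- Adjacency in the Cayley graph restricted to the set `V`. -/
def Adj {k : ℕ} (S : Fin k → G) (V : Set G) (a b : G) : Prop :=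
  a ∈ V ∧ b ∈ V ∧ ∃ i, a * S i = b

/-- Reachability inside `V` in the Cayley graph of `(G,S)`. -/
def Reach {k : ℕ} (S : Fin k → G) (V : Set G) (a b : G) : Prop :=
  Relation.ReflTransGen (Adj S V) a b

/-- `G` has at least two ends: for some `n`, the complement of the ball of radius `n` in the
Cayley graph has at least two infinite connected components. -/
def HasTwoOrMoreEnds {k : ℕ} (S : Fin k → G) : Prop :=
  ∃ (n : ℕ) (x y : G), x ∉ ballS S n ∧ y ∉ ballS S n ∧
    {z | Reach S (ballS S n)ᶜ x z}.Infinite ∧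
    {z | Reach S (ballS S n)ᶜ y z}.Infinite ∧
    ¬ Reach S (ballS S n)ᶜ x y

/-- The Følner condition: `G` is amenable. -/
def FolnerAmenable (G : Type) [Group G] : Prop :=
  ∀ (K : Finset G) (ε : ℝ), 0 < ε →
    ∃ F : Finset G, F.Nonempty ∧ ∀ k ∈ K,
      ((F \ F.image (fun x => x * k)).card : ℝ) < ε * F.card

/-! ### `G × ℤ`, presentations, hardness and the domino problems -/

/-- Generators of `G × ℤ`: the generators of `G` paired with `0`, together with `(1,±1)`. -/
def prodGens {k : ℕ} (S : Fin k → G) : Fin (k + 2) → G × Multiplicative ℤ :=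
  fun i =>
    if h : (i : ℕ) < k then (S ⟨i, h⟩, 1)
    else if (i : ℕ) = k then (1, Multiplicative.ofAdd 1)
    else (1, Multiplicative.ofAdd (-1))

/-- The element of the free group over the generator indices represented by a word. -/
def freeWord {k : ℕ} (w : List (Fin k)) : FreeGroup (Fin k) :=
  (w.map FreeGroup.of).prod

/-- `G` is recursively presented with respect to `S`: there is a recursively enumerable set of
relators (words over the generators) whose normal closure in the free group over the
generator indices is the kernel of the evaluation map. -/
def RecursivelyPresented {k : ℕ} (S : Fin k → G) : Prop :=
  ∃ R : Set (List (Fin k)), REPred (· ∈ R) ∧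
    MonoidHom.ker (FreeGroup.lift S) = Subgroup.normalClosure (freeWord '' R)

/-- `L` is hard for the class of predicates recursively enumerable in the oracle `O`
(equivalently, hard for the halting problem of machines with oracle `O`): every
such predicate many-one reduces to `L` via a computable function. -/
def OracleREHard {α : Type} [Primcodable α] (O : ℕ →. ℕ) (L : Set α) : Prop :=
  ∀ p : ℕ → Prop, RePredIn O p → ∃ f : ℕ → α, Computable f ∧ ∀ n, p n ↔ f n ∈ L

/-- The domino problem of `(K,T)`: pairs `(N, F)` of an alphabet size and a finite list of
pattern codings over `ℕ` such that no configuration with symbols `< N` avoids `F`. -/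
def DP {K : Type} [Group K] {m : ℕ} (T : Fin m → K) : Set (ℕ × List (PatternCoding m ℕ)) :=
  {q | ¬ ∃ x : K → ℕ, (∀ g, x g < q.1) ∧ x ∈ XC T {c | c ∈ q.2}}

/-- The origin constrained domino problem of `(K,T)`: triples `((N,a),F)` such that no
configuration with symbols `< N` and the symbol `a` at the origin avoids `F`. -/
def OCDP {K : Type} [Group K] {m : ℕ} (T : Fin m → K) :
    Set ((ℕ × ℕ) × List (PatternCoding m ℕ)) :=
  {q | ¬ ∃ x : K → ℕ, (∀ g, x g < q.1.1) ∧ x 1 = q.1.2 ∧ x ∈ XC T {c | c ∈ q.2}}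


/-!
The witness is the coherent subshift `Xcoh`: configurations in which all positions carrying the
symbol `2` see the same configuration around them. Its forbidden patterns are enumerable (even
without the word-problem oracle).

Suppose `Xcoh` were a factor of an SFT `Y` through a local rule with window `W`. An infinite
finitely generated group has, for some `q`, subgroups `T` leaving any prescribed finite set while
meeting it in at most `q` points: powers of an element of infinite order, or else the cyclic
subgroup generated by a far away conjugate of an element whose conjugacy class is infinite (if
all classes were finite, the centre would have finite index, hence be a finitely generated
abelian torsion group, hence finite). Let `F` be a Følner set. Marking `T` with `2` and writing
arbitrary bits on the other right cosets of `T` met by `F` gives about `2 ^ (|F| / q)` points of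
`Xcoh`, while the inner boundary of `F * W` has size `o(|F|)`. Two of their lifts to `Y` then
agree on that boundary and can be glued; the image of the glued configuration carries `2` at `1`
and at a far away `t ∈ T`, but shows the first code around `1` and the second around `t`,
contradicting coherence.
-/

open scoped Pointwise

theorem NatPartrecIn.of_natPartrec {O : ℕ →. ℕ} {f : ℕ →. ℕ} (h : Nat.Partrec f) :
    NatPartrecIn O f := by
  induction h with
  | zero => exact .zero
  | succ => exact .succ
  | left => exact .left
  | right => exact .right
  | pair _ _ ihf ihg => exact .pair ihf ihg
  | comp _ _ ihf ihg => exact .comp ihf ihg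
  | prec _ _ ihf ihg => exact .prec ihf ihg
  | rfind _ ihf => exact .rfind ihf

theorem RePredIn.of_rePred {O : ℕ →. ℕ} {α : Type} [Primcodable α] {p : α → Prop}
    (h : REPred p) : RePredIn O p :=
  NatPartrecIn.of_natPartrec h

theorem wordEval_nil {k : ℕ} (S : Fin k → G) : wordEval S [] = 1 := rfl

theorem wordEval_append {k : ℕ} (S : Fin k → G) (w v : List (Fin k)) :
    wordEval S (w ++ v) = wordEval S w * wordEval S v := by
  simp [wordEval]

theorem wordEval_surjective {k : ℕ} {S : Fin k → G} (hS : IsGenData S) :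
    Function.Surjective (wordEval S) := by
  intro g
  have hinv : (Set.range S)⁻¹ ⊆ Set.range S := by
    rintro _ ⟨i, hi⟩
    obtain ⟨j, hj⟩ := hS.2.1 i
    exact ⟨j, by rw [hj, hi, inv_inv]⟩
  have hg : g ∈ Submonoid.closure (Set.range S) := by
    rw [← Set.union_eq_left.mpr hinv, ← Subgroup.closure_toSubmonoid, hS.2.2]
    exact Subgroup.mem_top g
  rw [← FreeMonoid.mrange_lift] at hg
  obtain ⟨l, rfl⟩ := hg
  exact ⟨l.toList, (FreeMonoid.lift_apply S l).symm⟩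

def Xcoh (G : Type) [Group G] : Set (G → Fin 3) :=
  {x | ∀ g g' h : G, x g = 2 → x g' = 2 → x (g * h) = x (g' * h)}

theorem isSubshift_Xcoh : IsSubshift (Xcoh G) := by
  refine ⟨?_, fun x hx g₀ g g' h hg hg' => by
    simpa [mul_assoc] using hx (g₀⁻¹ * g) (g₀⁻¹ * g') h hg hg'⟩
  let _ : TopologicalSpace (Fin 3) := ⊥
  have : DiscreteTopology (Fin 3) := ⟨rfl⟩
  have hopen : ∀ g : G, IsOpen {x : G → Fin 3 | x g = 2} := fun g =>
    (isOpen_discrete {2}).preimage (continuous_apply g)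
  simp only [Xcoh, Set.ofPred_forall]
  exact isClosed_iInter fun g => isClosed_iInter fun g' => isClosed_iInter fun h =>
    isClosed_imp (hopen g) (isClosed_imp (hopen g')
      (isClosed_eq (continuous_apply _) (continuous_apply _)))

def cohCoding {k : ℕ} (w v : List (Fin k)) (a b : Fin 3) : PatternCoding k (Fin 3) :=
  [([], 2), (w, 2), (v, a), (w ++ v, b)]

def Ccoh (k : ℕ) : Set (PatternCoding k (Fin 3)) :=
  {c | ∃ (w v : List (Fin k)) (a b : Fin 3), c = cohCoding w v a b ∧ a ≠ b}

theorem Xcoh_eq_XC {k : ℕ} {S : Fin k → G} (hS : IsGenData S) : Xcoh G = XC S (Ccoh k) := by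
  ext x
  constructor
  · rintro hx ⟨g, _, ⟨w, v, a, b, rfl, hab⟩, hocc⟩
    simp only [cohCoding, List.mem_cons, List.not_mem_nil, or_false, forall_eq_or_imp,
      forall_eq, wordEval_append] at hocc
    obtain ⟨h0, hw, hv, hwv⟩ := hocc
    refine hab ?_
    rw [← hv, ← hwv, ← mul_assoc]
    exact hx _ _ _ (by simpa [wordEval_nil] using h0) hw
  · intro hx g g' h hg hg'
    by_contra hne
    obtain ⟨w, hw⟩ := wordEval_surjective hS (g⁻¹ * g')
    obtain ⟨v, hv⟩ := wordEval_surjective hS h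
    refine hx ⟨g, _, ⟨w, v, _, _, rfl, hne⟩, ?_⟩
    simp [cohCoding, wordEval_nil, wordEval_append, hw, hv, ← mul_assoc, hg, hg']

theorem primrec_cohCoding {k : ℕ} :
    Primrec fun p : List (Fin k) × List (Fin k) × Fin 3 × Fin 3 =>
      cohCoding p.1 p.2.1 p.2.2.1 p.2.2.2 := by
  have hv : Primrec fun p : List (Fin k) × List (Fin k) × Fin 3 × Fin 3 => p.2.1 :=
    Primrec.fst.comp Primrec.snd
  exact Primrec.list_cons.comp (.const _) <| Primrec.list_cons.comp (Primrec.fst.pair (.const _)) <|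
    Primrec.list_cons.comp (hv.pair (Primrec.fst.comp (Primrec.snd.comp Primrec.snd))) <|
    Primrec.list_cons.comp ((Primrec.list_append.comp Primrec.fst hv).pair
      (Primrec.snd.comp (Primrec.snd.comp Primrec.snd))) (.const [])

theorem mem_Ccoh_iff {k : ℕ} (c : PatternCoding k (Fin 3)) :
    c ∈ Ccoh k ↔ c = cohCoding (c.getD 1 ([], 0)).1 (c.getD 2 ([], 0)).1
        (c.getD 2 ([], 0)).2 (c.getD 3 ([], 0)).2 ∧
      (c.getD 2 ([], 0)).2 ≠ (c.getD 3 ([], 0)).2 := by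
  constructor
  · rintro ⟨w, v, a, b, rfl, hab⟩
    exact ⟨rfl, hab⟩
  · intro h
    exact ⟨_, _, _, _, h⟩

theorem primrecPred_mem_Ccoh (k : ℕ) : PrimrecPred (· ∈ Ccoh k) := by
  have hget : ∀ i, Primrec fun c : PatternCoding k (Fin 3) => c.getD i ([], 0) := fun i =>
    (Primrec.list_getD _).comp .id (.const i)
  refine (PrimrecPred.and (Primrec.eq.comp .id ?_) (Primrec.eq.comp ?_ ?_).not).of_eq
    fun c => (mem_Ccoh_iff c).symm
  · exact primrec_cohCoding.comp <| (Primrec.fst.comp (hget 1)).pair <|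
      (Primrec.fst.comp (hget 2)).pair <| (Primrec.snd.comp (hget 2)).pair (Primrec.snd.comp (hget 3))
  · exact Primrec.snd.comp (hget 2)
  · exact Primrec.snd.comp (hget 3)

theorem gEffectivelyClosed_Xcoh {k : ℕ} {S : Fin k → G} (hS : IsGenData S) :
    GEffectivelyClosed S (Xcoh G) :=
  ⟨Ccoh k, RePredIn.of_rePred (primrecPred_mem_Ccoh k).computablePred.to_re, Xcoh_eq_XC hS⟩

section CosetConfig

def cosetConfig (T : Subgroup G) (s : Finset (Quotient (QuotientGroup.rightRel T))) (g : G) :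
    Fin 3 :=
  if g ∈ T then 2 else if Quotient.mk'' g ∈ s then 1 else 0

variable {T : Subgroup G} {s : Finset (Quotient (QuotientGroup.rightRel T))}

theorem cosetConfig_eq_two_iff {g : G} : cosetConfig T s g = 2 ↔ g ∈ T := by
  unfold cosetConfig
  split_ifs <;> simp_all

theorem cosetConfig_mul_of_mem {t : G} (ht : t ∈ T) (g : G) :
    cosetConfig T s (t * g) = cosetConfig T s g := by
  have hcoset : (Quotient.mk'' (t * g) : Quotient (QuotientGroup.rightRel T)) = Quotient.mk'' g :=
    Quotient.eq''.mpr (QuotientGroup.rightRel_apply.mpr (by simpa using T.inv_mem ht))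
  simp only [cosetConfig, hcoset, T.mul_mem_cancel_left ht]

theorem cosetConfig_mem_Xcoh : cosetConfig T s ∈ Xcoh G := by
  intro g g' h hg hg'
  rw [cosetConfig_eq_two_iff] at hg hg'
  rw [← cosetConfig_mul_of_mem (T.mul_mem hg' (T.inv_mem hg)) (g * h)]
  group

def nontrivialCosets (T : Subgroup G) (F : Finset G) :
    Finset (Quotient (QuotientGroup.rightRel T)) :=
  (F.image Quotient.mk'').erase (Quotient.mk'' 1)

theorem eq_of_cosetConfig_eqOn {F : Finset G} {s' : Finset (Quotient (QuotientGroup.rightRel T))}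
    (hs : s ⊆ nontrivialCosets T F) (hs' : s' ⊆ nontrivialCosets T F)
    (h : ∀ r ∈ F, cosetConfig T s r = cosetConfig T s' r) : s = s' := by
  ext c
  by_cases hc : c ∈ nontrivialCosets T F
  · obtain ⟨hc1, hcF⟩ := Finset.mem_erase.mp hc
    obtain ⟨r, hr, rfl⟩ := Finset.mem_image.mp hcF
    have hrT : r ∉ T := fun hrT => hc1 (Quotient.eq''.mpr
      (QuotientGroup.rightRel_apply.mpr (by simpa using hrT)))
    have := h r hr
    simp only [cosetConfig, if_neg hrT] at this
    split_ifs at this <;> simp_all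
  · exact iff_of_false (fun h => hc (hs h)) (fun h => hc (hs' h))

theorem card_le_mul_card_nontrivialCosets {F : Finset G} {q : ℕ}
    (hF : 1 ∈ F) (hq : ((F * F⁻¹).filter (· ∈ T)).card ≤ q) :
    F.card ≤ q * ((nontrivialCosets T F).card + 1) := by
  rw [nontrivialCosets, Finset.card_erase_add_one (Finset.mem_image_of_mem _ hF)]
  refine Finset.card_le_mul_card_image F q fun c _ => ?_
  rcases (F.filter fun r => Quotient.mk'' r = c).eq_empty_or_nonempty with he | ⟨a, ha⟩
  · simp [he]
  refine le_trans (Finset.card_le_card_of_injOn (· * a⁻¹) (fun r hr => ?_)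
    (fun x _ y _ h => mul_right_cancel h)) hq
  obtain ⟨hrF, hrc⟩ := Finset.mem_filter.mp hr
  obtain ⟨haF, hac⟩ := Finset.mem_filter.mp ha
  refine Finset.mem_filter.mpr ⟨Finset.mul_mem_mul hrF (Finset.inv_mem_inv haF), ?_⟩
  exact QuotientGroup.rightRel_apply.mp (Quotient.eq''.mp (hac.trans hrc.symm))

end CosetConfig

def HasEscapingSubgroups (G : Type) [Group G] (q : ℕ) : Prop :=
  ∀ E : Finset G, ∃ T : Subgroup G, (∃ t ∈ T, t ∉ E) ∧ (E.filter (· ∈ T)).card ≤ q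

theorem hasEscapingSubgroups_of_not_isOfFinOrder {t : G} (ht : ¬ IsOfFinOrder t) :
    HasEscapingSubgroups G 1 := by
  intro E
  have hinj : Function.Injective (t ^ · : ℤ → G) := injective_zpow_iff_not_isOfFinOrder.mpr ht
  obtain ⟨M, hM⟩ := ((E.finite_toSet.preimage hinj.injOn).image Int.natAbs).bddAbove
  have hbound : ∀ n : ℤ, t ^ n ∈ E → n.natAbs ≤ M := fun n hn => hM ⟨n, hn, rfl⟩
  set N : ℤ := M + 1
  refine ⟨Subgroup.zpowers (t ^ N), ⟨t ^ N, Subgroup.mem_zpowers _, fun h => ?_⟩, ?_⟩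
  · have := hbound N h
    omega
  · refine Finset.card_le_one.mpr fun a ha b hb => ?_
    have hone : ∀ x ∈ E.filter (· ∈ Subgroup.zpowers (t ^ N)), x = 1 := by
      intro x hx
      obtain ⟨hxE, j, rfl⟩ := Finset.mem_filter.mp hx
      have hj := hbound (N * j) (by simpa [zpow_mul] using hxE)
      rw [Int.natAbs_mul] at hj
      have : j = 0 := by
        by_contra hj0
        have : 1 ≤ j.natAbs := Int.natAbs_pos.mpr hj0
        have : N.natAbs = M + 1 := by omega
        nlinarith
      simp [this]
    rw [hone a ha, hone b hb]

theorem hasEscapingSubgroups_of_infinite_isConj {t₀ : G} (ht₀ : IsOfFinOrder t₀)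
    (hconj : {g | IsConj t₀ g}.Infinite) : HasEscapingSubgroups G (orderOf t₀) := by
  intro E
  obtain ⟨t, hconjt, htE⟩ := hconj.exists_notMem_finset E
  have hord : orderOf t = orderOf t₀ := by
    obtain ⟨c, rfl⟩ := isConj_iff.mp hconjt
    exact ((SemiconjBy.orderOf_eq c (by simp [SemiconjBy]))).symm
  have htfin : IsOfFinOrder t := by rwa [← orderOf_pos_iff, hord, orderOf_pos_iff]
  refine ⟨Subgroup.zpowers t, ⟨t, Subgroup.mem_zpowers t, htE⟩, ?_⟩
  calc (E.filter (· ∈ Subgroup.zpowers t)).card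
      = (↑(E.filter (· ∈ Subgroup.zpowers t)) : Set G).ncard := (Set.ncard_coe_finset _).symm
    _ ≤ (Subgroup.zpowers t : Set G).ncard :=
      Set.ncard_le_ncard (fun x hx => (Finset.mem_filter.mp hx).2) htfin.finite_zpowers
    _ = orderOf t₀ := by rw [← Nat.card_coe_set_eq, SetLike.coe_sort_coe, Nat.card_zpowers, hord]

theorem exists_infinite_isConj [Infinite G] [Group.FG G] (htor : IsMulTorsion G) :
    ∃ t₀ : G, {g | IsConj t₀ g}.Infinite := by
  by_contra! hfin
  obtain ⟨S, hS, hSfin⟩ := Group.fg_iff.mp ‹Group.FG G›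
  have hindex : ∀ g : G, (Subgroup.centralizer {g}).FiniteIndex := by
    intro g
    have : Subgroup.centralizer {g} = (MulAction.stabilizer (ConjAct G) g).comap
        (ConjAct.toConjAct : G ≃* ConjAct G).toMonoidHom := by
      ext h
      simp [Subgroup.mem_centralizer_singleton_iff, ConjAct.smul_def, mul_inv_eq_iff_eq_mul]
    rw [this, Subgroup.finiteIndex_iff,
      Subgroup.index_comap_of_surjective _ (MulEquiv.surjective _), MulAction.index_stabilizer]
    exact Set.ncard_ne_zero_of_mem (MulAction.mem_orbit_self g)
      ((hfin g).subset fun h hh => (ConjAct.mem_orbit_conjAct.mp hh).symm)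
  have : (Subgroup.center G).FiniteIndex := by
    have := hSfin.to_subtype
    rw [Subgroup.center_eq_infi' hS]
    exact Subgroup.finiteIndex_iInf fun g => hindex g
  let _ : CommGroup (Subgroup.center G) := { mul_comm := mul_comm' }
  have : Group.FG (Subgroup.center G) := Subgroup.fg_of_index_ne_zero _
  have : Finite (Subgroup.center G) :=
    CommGroup.finite_of_fg_isMulTorsion _ fun z => Submonoid.isOfFinOrder_coe.mp (htor z)
  exact not_finite_iff_infinite.mpr ‹_›
    ((Subgroup.finite_iff_finite_and_finiteIndex _).mpr ⟨this, ‹_›⟩)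

theorem exists_hasEscapingSubgroups (G : Type) [Group G] [Infinite G] [Group.FG G] :
    ∃ q, 0 < q ∧ HasEscapingSubgroups G q := by
  by_cases htor : IsMulTorsion G
  · obtain ⟨t₀, ht₀⟩ := exists_infinite_isConj htor
    exact ⟨_, (htor t₀).orderOf_pos, hasEscapingSubgroups_of_infinite_isConj (htor t₀) ht₀⟩
  · obtain ⟨t, ht⟩ := not_forall.mp htor
    exact ⟨1, one_pos, hasEscapingSubgroups_of_not_isOfFinOrder ht⟩

theorem FolnerAmenable.exists_one_mem (ham : FolnerAmenable G) (K : Finset G) (n : ℕ) :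
    ∃ F : Finset G, 1 ∈ F ∧ ∀ k ∈ K, n * (F \ F.image (· * k)).card < F.card := by
  obtain ⟨F, ⟨f, hf⟩, hFol⟩ := ham K (1 / (n + 1)) (by positivity)
  have hinj : Function.Injective (f⁻¹ * · : G → G) := mul_right_injective f⁻¹
  refine ⟨F.image (f⁻¹ * ·), Finset.mem_image.mpr ⟨f, hf, inv_mul_cancel f⟩, fun k hk => ?_⟩
  have hsdiff : F.image (f⁻¹ * ·) \ (F.image (f⁻¹ * ·)).image (· * k) =
      (F \ F.image (· * k)).image (f⁻¹ * ·) := by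
    rw [Finset.image_sdiff _ _ hinj, Finset.image_image, Finset.image_image]
    simp only [Function.comp_def, mul_assoc]
  rw [hsdiff, Finset.card_image_of_injective _ hinj, Finset.card_image_of_injective _ hinj]
  have h := hFol k hk
  rw [div_mul_eq_mul_div, one_mul, lt_div_iff₀ (by positivity)] at h
  have : ((n * (F \ F.image (· * k)).card : ℕ) : ℝ) < F.card := by push_cast; nlinarith
  exact_mod_cast this

theorem subset_inv_mul_of_card_sdiff_lt {F K : Finset G}
    (h : ∀ k ∈ K, (F \ F.image (· * k)).card < F.card) : K ⊆ F⁻¹ * F := by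
  intro k hk
  obtain ⟨a, haF, ha⟩ := Finset.exists_mem_notMem_of_card_lt_card (h k hk)
  have hak : a * k⁻¹ ∈ F := by simpa [haF] using ha
  simpa using Finset.mul_mem_mul (Finset.inv_mem_inv hak) haF

def innerBoundary (D P : Finset G) : Finset G :=
  D.filter fun a => ∃ p ∈ P, a * p ∉ D

theorem card_innerBoundary_mul_le (F W P : Finset G) :
    (innerBoundary (F * W) P).card ≤
      ∑ v ∈ W, ∑ p ∈ P, (F \ F.image (· * (v * p⁻¹ * v⁻¹))).card := by
  have hsub : innerBoundary (F * W) P ⊆ W.biUnion fun v => P.biUnion fun p =>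
      (F \ F.image (· * (v * p⁻¹ * v⁻¹))).image (· * v) := by
    intro a ha
    obtain ⟨haD, p, hp, hapD⟩ := Finset.mem_filter.mp ha
    obtain ⟨f, hf, v, hv, rfl⟩ := Finset.mem_mul.mp haD
    refine Finset.mem_biUnion.mpr ⟨v, hv, Finset.mem_biUnion.mpr ⟨p, hp,
      Finset.mem_image.mpr ⟨f, Finset.mem_sdiff.mpr ⟨hf, fun hf' => hapD ?_⟩, rfl⟩⟩⟩
    obtain ⟨f', hf', hff'⟩ := Finset.mem_image.mp hf'
    rw [← hff']
    simpa [mul_assoc] using Finset.mul_mem_mul hf' hv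
  refine (Finset.card_le_card hsub).trans (Finset.card_biUnion_le.trans
    (Finset.sum_le_sum fun v _ => Finset.card_biUnion_le.trans
      (Finset.sum_le_sum fun p _ => Finset.card_image_le)))

theorem FolnerAmenable.exists_many_cosets [Infinite G] (ham : FolnerAmenable G) {q : ℕ}
    (hq : 0 < q) (hesc : HasEscapingSubgroups G q) {W P : Finset G} (hW : 1 ∈ W) (hP : 1 ∈ P)
    (m : ℕ) :
    ∃ (F : Finset G) (T : Subgroup G) (t : G), 1 ∈ F ∧ t ∈ T ∧ t ∉ (F * W) * (F * W)⁻¹ ∧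
      m ^ (innerBoundary (F * W) P).card < 2 ^ (nontrivialCosets T F).card := by
  obtain ⟨Z, hZ⟩ := Finset.exists_card_eq (α := G) ((2 * q) ^ 2)
  set M := W.card * P.card
  have hM : 0 < M := Nat.mul_pos (Finset.card_pos.mpr ⟨1, hW⟩) (Finset.card_pos.mpr ⟨1, hP⟩)
  set n := 2 * q * (m + 1)
  obtain ⟨F, hF1, hFol⟩ := ham.exists_one_mem
    ((W ×ˢ P).image (fun vp => vp.1 * vp.2⁻¹ * vp.1⁻¹) ∪ Z) (n * M)
  have hlarge : 2 * q ≤ F.card := by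
    have hZF : Z ⊆ F⁻¹ * F := subset_inv_mul_of_card_sdiff_lt fun k hk =>
      (Nat.le_mul_of_pos_left _ (by positivity)).trans_lt (hFol k (Finset.mem_union_right _ hk))
    have : (2 * q) ^ 2 ≤ F.card ^ 2 := hZ ▸ (Finset.card_le_card hZF).trans
      (Finset.card_mul_le.trans (by rw [Finset.card_inv, sq]))
    exact (Nat.pow_le_pow_iff_left two_ne_zero).mp this
  set b := (innerBoundary (F * W) P).card
  have hbdry : n * b < F.card := by
    refine Nat.lt_of_mul_lt_mul_left (a := M) ?_
    calc M * (n * b) = n * M * b := by ring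
      _ ≤ n * M * ∑ v ∈ W, ∑ p ∈ P, (F \ F.image (· * (v * p⁻¹ * v⁻¹))).card :=
        Nat.mul_le_mul_left _ (card_innerBoundary_mul_le F W P)
      _ = ∑ v ∈ W, ∑ p ∈ P, n * M * (F \ F.image (· * (v * p⁻¹ * v⁻¹))).card := by
        simp only [Finset.mul_sum]
      _ < ∑ v ∈ W, ∑ p ∈ P, F.card :=
        Finset.sum_lt_sum_of_nonempty ⟨1, hW⟩ fun v hv => Finset.sum_lt_sum_of_nonempty ⟨1, hP⟩
          fun p hp => hFol _ (Finset.mem_union_left _ (Finset.mem_image.mpr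
            ⟨(v, p), Finset.mem_product.mpr ⟨hv, hp⟩, rfl⟩))
      _ = M * F.card := by simp only [Finset.sum_const, smul_eq_mul, M]; ring
  obtain ⟨T, ⟨t, htT, htE⟩, hTq⟩ := hesc ((F * W) * (F * W)⁻¹)
  have hFW : F ⊆ F * W := fun f hf => by simpa using Finset.mul_mem_mul hf hW
  set c := (nontrivialCosets T F).card
  have hcos : F.card ≤ q * (c + 1) := card_le_mul_card_nontrivialCosets hF1
    ((Finset.card_le_card (Finset.filter_subset_filter _
      (Finset.mul_subset_mul hFW (Finset.inv_subset_inv hFW)))).trans hTq)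
  have h1 : 2 * ((m + 1) * b) < c + 1 :=
    Nat.lt_of_mul_lt_mul_left (a := q) (by
      calc q * (2 * ((m + 1) * b)) = n * b := by ring
        _ < q * (c + 1) := hbdry.trans_le hcos)
  have h2 : 1 ≤ c := by nlinarith
  refine ⟨F, T, t, hF1, htT, htE, ?_⟩
  calc m ^ b ≤ (2 ^ m) ^ b := Nat.pow_le_pow_left Nat.lt_two_pow_self.le _
    _ = 2 ^ (m * b) := (pow_mul 2 m b).symm
    _ < 2 ^ c := Nat.pow_lt_pow_right one_lt_two (by nlinarith)

open Filter in
theorem _root_.IsCompact.exists_finset_eq_of_continuousOn {ι B A : Type*}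
    [UniformSpace B] [DiscreteUniformity B] [UniformSpace A] [DiscreteUniformity A]
    {Y : Set (ι → B)} (hY : IsCompact Y) {c : (ι → B) → A} (hc : ContinuousOn c Y) :
    ∃ I : Finset ι, ∀ y ∈ Y, ∀ y' ∈ Y, (∀ i ∈ I, y i = y' i) → c y = c y' := by
  have hu := hY.uniformContinuousOn_of_continuous hc
    (DiscreteUniformity.eq_principal_setRelId (X := A) ▸ mem_principal_self _)
  simp only [Filter.mem_map, Pi.uniformity, mem_inf_principal,
    DiscreteUniformity.eq_principal_setRelId, comap_principal, mem_iInf', mem_principal] at hu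
  obtain ⟨I, hI, V, hV, -, hUV, -⟩ := hu
  refine ⟨hI.toFinset, fun y hy y' hy' hyy' => ?_⟩
  have : (y, y') ∈ ⋂ i ∈ I, V i :=
    Set.mem_iInter₂.mpr fun i hi => hV i (hyy' i (hI.mem_toFinset.mpr hi))
  exact (hUV ▸ this) ⟨hy, hy'⟩

theorem piecewise_mem_XPat {B : Type} {Fs : Set (Pattern G B)} {P : Finset G}
    (hP : ∀ p ∈ Fs, p.supp ⊆ P) {y y' : G → B} (hy : y ∈ XPat Fs) (hy' : y' ∈ XPat Fs)
    (D : Finset G) (hagree : ∀ a ∈ innerBoundary D (P⁻¹ * P), y a = y' a) :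
    D.piecewise y y' ∈ XPat Fs := by
  rintro ⟨g, p, hpFs, hocc⟩
  by_cases hin : ∀ h ∈ p.supp, g * h ∈ D
  · exact hy ⟨g, p, hpFs, fun h hh => by rw [← hocc h hh, D.piecewise_eq_of_mem _ _ (hin h hh)]⟩
  push Not at hin
  obtain ⟨h₀, hh₀, hh₀D⟩ := hin
  refine hy' ⟨g, p, hpFs, fun h hh => ?_⟩
  rw [← hocc h hh]
  by_cases hD : g * h ∈ D
  · rw [D.piecewise_eq_of_mem _ _ hD]
    have hp : h⁻¹ * h₀ ∈ P⁻¹ * P :=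
      Finset.mul_mem_mul (Finset.inv_mem_inv (hP p hpFs hh)) (hP p hpFs hh₀)
    exact (hagree _ (Finset.mem_filter.mpr ⟨hD, _, hp, by simpa [mul_assoc] using hh₀D⟩)).symm
  · rw [D.piecewise_eq_of_notMem _ _ hD]

theorem SoficVia.exists_window {X : Set (G → Fin 3)} (V : SoficVia G X) :
    ∃ W : Finset G, 1 ∈ W ∧ ∀ y ∈ V.Y, ∀ y' ∈ V.Y, ∀ g : G,
      (∀ v ∈ W, y (g * v) = y' (g * v)) → V.phi y g = V.phi y' g := by
  let _ : UniformSpace V.B := ⊥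
  let _ : UniformSpace (Fin 3) := ⊥
  have := V.finB
  have hY : IsCompact V.Y := V.subY.1.isCompact
  obtain ⟨I, hI⟩ := hY.exists_finset_eq_of_continuousOn
    ((continuous_apply 1).comp_continuousOn V.cont)
  refine ⟨insert 1 I, Finset.mem_insert_self 1 I, fun y hy y' hy' g hyy' => ?_⟩
  have hshift : ∀ z ∈ V.Y, V.phi z g = V.phi (fun h => z (g * h)) 1 := fun z hz => by
    simpa using (congrFun (V.equiv z hz g⁻¹) 1).symm
  rw [hshift y hy, hshift y' hy']
  exact hI _ (by simpa using V.subY.2 y hy g⁻¹) _ (by simpa using V.subY.2 y' hy' g⁻¹)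
    fun i hi => hyy' i (Finset.mem_insert_of_mem hi)

theorem SoficVia.exists_gluing {A : Type} {X : Set (G → A)} (V : SoficVia G X) :
    ∃ P : Finset G, 1 ∈ P ∧ ∀ y ∈ V.Y, ∀ y' ∈ V.Y, ∀ D : Finset G,
      (∀ a ∈ innerBoundary D P, y a = y' a) → D.piecewise y y' ∈ V.Y := by
  obtain ⟨Fs, hFs, hY⟩ := V.sft
  set P₀ := insert 1 (hFs.toFinset.biUnion Pattern.supp)
  have h1 : (1 : G) ∈ P₀⁻¹ * P₀ := by
    have h0 : (1 : G) ∈ P₀ := Finset.mem_insert_self _ _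
    have h := Finset.mul_mem_mul (Finset.inv_mem_inv h0) h0
    rwa [inv_one, one_mul] at h
  refine ⟨P₀⁻¹ * P₀, h1, fun y hy y' hy' D hagree => ?_⟩
  rw [hY] at hy hy' ⊢
  exact piecewise_mem_XPat (fun p hp => (Finset.subset_biUnion_of_mem _
    (hFs.mem_toFinset.mpr hp)).trans (Finset.subset_insert _ _)) hy hy' D hagree

theorem not_isSofic_Xcoh [Infinite G] [Group.FG G] (ham : FolnerAmenable G) :
    ¬ IsSofic (Xcoh G) := by
  rintro ⟨V⟩
  have := V.finB
  obtain ⟨W, hW1, hW⟩ := V.exists_window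
  obtain ⟨P, hP1, hglue⟩ := V.exists_gluing
  obtain ⟨q, hq, hesc⟩ := exists_hasEscapingSubgroups G
  obtain ⟨F, T, t, hF1, htT, htD, hcard⟩ :=
    ham.exists_many_cosets hq hesc hW1 hP1 (Fintype.card V.B)
  set D := F * W
  set C := nontrivialCosets T F
  have hlift : ∀ s : C.powerset, ∃ y ∈ V.Y, V.phi y = cosetConfig T s :=
    fun s => (V.image.symm ▸ cosetConfig_mem_Xcoh : cosetConfig T s ∈ V.phi '' V.Y)
  choose y hyY hyphi using hlift
  obtain ⟨s, s', hss', hyy'⟩ := Fintype.exists_ne_map_eq_of_card_lt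
    (fun s (a : innerBoundary D P) => y s a) (by simpa [Fintype.card_fun] using hcard)
  have hz := hglue _ (hyY s) _ (hyY s') D fun a ha => congrFun hyy' ⟨a, ha⟩
  set x := V.phi (D.piecewise (y s) (y s'))
  have hx : x ∈ Xcoh G := V.image ▸ ⟨_, hz, rfl⟩
  have hxF : ∀ r ∈ F, x r = cosetConfig T s r := fun r hr => by
    rw [← hyphi s]
    exact hW _ hz _ (hyY s) r fun v hv => D.piecewise_eq_of_mem _ _ (Finset.mul_mem_mul hr hv)
  have hxt : ∀ r ∈ F, x (t * r) = cosetConfig T s' r := fun r hr => by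
    rw [← cosetConfig_mul_of_mem htT, ← hyphi s']
    refine hW _ hz _ (hyY s') _ fun v hv => D.piecewise_eq_of_notMem _ _ fun htrv => htD ?_
    convert Finset.mul_mem_mul htrv (Finset.inv_mem_inv (Finset.mul_mem_mul hr hv)) using 1
    group
  have hx1 : x 1 = 2 := by rw [hxF 1 hF1, cosetConfig_eq_two_iff]; exact T.one_mem
  have hxt1 : x t = 2 := by rw [← mul_one t, hxt 1 hF1, cosetConfig_eq_two_iff]; exact T.one_mem
  refine hss' (Subtype.ext (eq_of_cosetConfig_eqOn (Finset.mem_powerset.mp s.2)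
    (Finset.mem_powerset.mp s'.2) fun r hr => ?_))
  rw [← hxF r hr, ← hxt r hr]
  simpa using hx 1 t r hx1 hxt1

/-- Every infinite finitely generated amenable group admits a `G`-effectively
closed subshift over the alphabet `{0,1,2}` which is not sofic. -/
theorem amenable_gEffectivelyClosed_not_sofic
    {G : Type} [Group G] [Infinite G] {k : ℕ} (S : Fin k → G) (hS : IsGenData S)
    (ham : FolnerAmenable G) :
    ∃ X : Set (G → Fin 3), IsSubshift X ∧ GEffectivelyClosed S X ∧ ¬ IsSofic X := by
  have : Group.FG G := Group.fg_iff.mpr ⟨Set.range S, hS.2.2, Set.finite_range S⟩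
  exact ⟨Xcoh G, isSubshift_Xcoh, gEffectivelyClosed_Xcoh hS, not_isSofic_Xcoh ham⟩

end SDG
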